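/- Up to isomorphism, there is a unique graph on 6 vertices with strictly positive vertex weights, three of whose vertices are designated ports that are pairwise non-adjacent, whose maximum-weight independent sets restricted to ports realize the XNOR language {001, 010, 100, 111}: it is the graph in which each port is adjacent to exactly the two ancillas not 'opposite' to it and all three ancillas are pairwise adjacent (the octahedron-like 'hexagon plus ancilla-triangle' graph), and the ancilla opposite port i must carry weight equal to the sum of the weights of the other two ports. -/

import Mathlib

open Finset
open scoped Classical

section Framework

variable {V : Type*} {ι : Type*}

/-- An independent set of a simple graph, given as a `Finset` of vertices. -/
def IsIndepSet' (G : SimpleGraph V) (S : Finset V) : Prop :=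
  ∀ i ∈ S, ∀ j ∈ S, ¬ G.Adj i j

/-- Total weight of a finite set of vertices. -/
noncomputable def wt (Δ : V → ℝ) (S : Finset V) : ℝ := ∑ v ∈ S, Δ v

/-- `S` is a maximum-weight independent set of `G` with weights `Δ`. -/
def IsMWIS (G : SimpleGraph V) (Δ : V → ℝ) (S : Finset V) : Prop :=
  IsIndepSet' G S ∧ ∀ T : Finset V, IsIndepSet' G T → wt Δ T ≤ wt Δ S

/-- Indicator vector recording which ports are contained in `S`. -/
noncomputable def portInd (ports : ι → V) (S : Finset V) : ι → Bool :=
  fun i => if ports i ∈ S then true else false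

/-- The weighted graph `G` with designated `ports` realizes the language `L`:
the map from maximum-weight independent sets to port indicator vectors is a
bijection onto `L`. -/
def Realizes (G : SimpleGraph V) (Δ : V → ℝ) (ports : ι → V)
    (L : Set (ι → Bool)) : Prop :=
  (∀ S, IsMWIS G Δ S → portInd ports S ∈ L) ∧
  (∀ x ∈ L, ∃ S, IsMWIS G Δ S ∧ portInd ports S = x) ∧
  (∀ S T, IsMWIS G Δ S → IsMWIS G Δ T →
    portInd ports S = portInd ports T → S = T)

/-- A maximal independent set: no vertex can be added while staying independent. -/
def IsMaxlIndep (G : SimpleGraph V) (S : Finset V) : Prop :=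
  IsIndepSet' G S ∧ ∀ v ∉ S, ¬ IsIndepSet' G (insert v S)

end Framework

/-- The XNOR language: truth table of `Q = A XNOR B`, letters ordered `(A, B, Q)`. -/
def LXNOR : Set (Fin 3 → Bool) :=
  {![false, false, true], ![false, true, false], ![true, false, false],
    ![true, true, true]}

/-- The unique minimal XNOR blockade graph on `Fin 6`: vertices `0,1,2` are ports,
`3,4,5` are ancillas, with ancilla `3 + i` "opposite" to port `i`. Each port is
adjacent to exactly the two ancillas not opposite to it, and the three ancillas
are pairwise adjacent. -/
def xnorGraph : SimpleGraph (Fin 6) :=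
  SimpleGraph.fromRel (fun a b =>
    (3 ≤ a.val ∧ 3 ≤ b.val) ∨ (a.val < 3 ∧ 3 ≤ b.val ∧ b.val ≠ a.val + 3))


section AuxLemmas

variable {V : Type*} [DecidableEq V]

private lemma wt_pair' (Δ : V → ℝ) {x y : V} (hxy : x ≠ y) :
    wt Δ ({x, y} : Finset V) = Δ x + Δ y := by
  rw [wt, Finset.sum_insert (by simp [hxy]), Finset.sum_singleton]

private lemma wt_triple' (Δ : V → ℝ) {x y z : V} (hxy : x ≠ y) (hxz : x ≠ z) (hyz : y ≠ z) :
    wt Δ ({x, y, z} : Finset V) = Δ x + Δ y + Δ z := by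
  rw [wt, Finset.sum_insert (by simp [hxy, hxz]), Finset.sum_insert (by simp [hyz]),
    Finset.sum_singleton]
  ring

private lemma indep_pair' {G : SimpleGraph V} {x y : V} (h : ¬ G.Adj x y) :
    IsIndepSet' G {x, y} := by
  intro a ha b hb
  simp only [Finset.mem_insert, Finset.mem_singleton] at ha hb
  rcases ha with rfl | rfl <;> rcases hb with rfl | rfl <;>
    first
      | exact G.loopless.irrefl _
      | assumption
      | exact fun h' => h h'.symm

private lemma indep_triple' {G : SimpleGraph V} {x y z : V}
    (h1 : ¬ G.Adj x y) (h2 : ¬ G.Adj x z) (h3 : ¬ G.Adj y z) :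
    IsIndepSet' G {x, y, z} := by
  intro a ha b hb
  simp only [Finset.mem_insert, Finset.mem_singleton] at ha hb
  rcases ha with rfl | rfl | rfl <;> rcases hb with rfl | rfl | rfl <;>
    first
      | exact G.loopless.irrefl _
      | assumption
      | exact fun h' => h1 h'.symm
      | exact fun h' => h2 h'.symm
      | exact fun h' => h3 h'.symm

private lemma mwis_adj_of_not_mem {G : SimpleGraph V} {Δ : V → ℝ} (hΔ : ∀ v, 0 < Δ v)
    {S : Finset V} (hS : IsMWIS G Δ S) {v : V} (hv : v ∉ S) :
    ∃ u ∈ S, G.Adj v u := by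
  by_contra hcon
  push_neg at hcon
  have hind : IsIndepSet' G (insert v S) := by
    intro a ha b hb
    rcases Finset.mem_insert.mp ha with rfl | ha' <;>
      rcases Finset.mem_insert.mp hb with rfl | hb'
    · exact G.loopless.irrefl _
    · exact hcon _ hb'
    · exact fun h' => hcon _ ha' h'.symm
    · exact hS.1 a ha' b hb'
  have hle := hS.2 _ hind
  have heq : wt Δ (insert v S) = Δ v + wt Δ S := by rw [wt, Finset.sum_insert hv]; rfl
  have hpos := hΔ v
  rw [heq] at hle
  linarith

end AuxLemmas

private lemma mem_three_of_nonport {p : Fin 3 → Fin 6} (hp : Function.Injective p)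
    {a b c : Fin 6} (hab : a ≠ b) (hac : a ≠ c) (hbc : b ≠ c)
    (ha : ∀ l, a ≠ p l) (hb : ∀ l, b ≠ p l) (hc : ∀ l, c ≠ p l)
    {v : Fin 6} (hv : ∀ l, v ≠ p l) : v = a ∨ v = b ∨ v = c := by
  classical
  set Np : Finset (Fin 6) := Finset.univ.filter (fun w => ∀ l, w ≠ p l) with hNp
  have hsub : ({a, b, c} : Finset (Fin 6)) ⊆ Np := by
    intro w hw
    simp only [Finset.mem_insert, Finset.mem_singleton] at hw
    rcases hw with rfl | rfl | rfl <;> simp [hNp, ha, hb, hc]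
  have hcard3 : ({a, b, c} : Finset (Fin 6)).card = 3 := by
    rw [Finset.card_insert_of_notMem (by simp [hab, hac]),
        Finset.card_insert_of_notMem (by simp [hbc]), Finset.card_singleton]
  have himg : (Finset.univ.filter (fun w : Fin 6 => ¬ ∀ l, w ≠ p l)).card = 3 := by
    have heq : Finset.univ.filter (fun w : Fin 6 => ¬ ∀ l, w ≠ p l)
        = Finset.univ.image p := by
      ext w
      simp only [Finset.mem_filter, Finset.mem_univ, true_and, Finset.mem_image]
      push_neg
      constructor
      · rintro ⟨l, hl⟩; exact ⟨l, hl.symm⟩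
      · rintro ⟨l, hl⟩; exact ⟨l, hl.symm⟩
    rw [heq, Finset.card_image_of_injective _ hp, Finset.card_univ, Fintype.card_fin]
  have hcardNp : Np.card = 3 := by
    have htot := Finset.card_filter_add_card_filter_not
      (s := (Finset.univ : Finset (Fin 6))) (p := fun w => ∀ l, w ≠ p l)
    rw [Finset.card_univ, Fintype.card_fin] at htot
    rw [hNp]
    omega
  have heq : ({a, b, c} : Finset (Fin 6)) = Np :=
    Finset.eq_of_subset_of_card_le hsub (by omega)
  have hvNp : v ∈ Np := by simp [hNp, hv]
  rw [← heq] at hvNp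
  simpa using hvNp

instance : DecidableRel xnorGraph.Adj := fun a b =>
  decidable_of_iff' _ (SimpleGraph.fromRel_adj _ a b)


/-- Uniqueness of the minimal XNOR blockade graph. Any graph on 6
vertices with strictly positive weights and three pairwise non-adjacent ports
realizing the XNOR language `{001, 010, 100, 111}` is isomorphic to `xnorGraph`
(with port `i` mapped to vertex `i`), and the ancilla opposite port `i` carries
weight equal to the sum of the weights of the other two ports. -/
theorem xnor_blockade_graph_unique (G : SimpleGraph (Fin 6)) (Δ : Fin 6 → ℝ)
    (p : Fin 3 → Fin 6) (hΔ : ∀ v, 0 < Δ v) (hp : Function.Injective p)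
    (hnadj : ∀ i j : Fin 3, i ≠ j → ¬ G.Adj (p i) (p j))
    (hreal : Realizes G Δ p LXNOR) :
    ∃ φ : G ≃g xnorGraph,
      (∀ i : Fin 3, φ (p i) = Fin.castLE (by norm_num) i) ∧
      Δ (φ.symm 3) = Δ (p 1) + Δ (p 2) ∧
      Δ (φ.symm 4) = Δ (p 0) + Δ (p 2) ∧
      Δ (φ.symm 5) = Δ (p 0) + Δ (p 1) := by
    classical
  obtain ⟨hfwd, hsurj, -⟩ := hreal
  have memP : ∀ (T : Finset (Fin 6)) (x : Fin 3 → Bool), portInd p T = x →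
      ∀ i : Fin 3, (x i = true → p i ∈ T) ∧ (x i = false → p i ∉ T) := by
    intro T x hx i
    subst hx
    by_cases h : p i ∈ T <;> simp [portInd, h]
  have indFalse : ∀ (U : Finset (Fin 6)), (∀ i : Fin 3, p i ∉ U) → portInd p U ∉ LXNOR := by
    intro U hU h
    simp only [LXNOR, Set.mem_insert_iff, Set.mem_singleton_iff] at h
    rcases h with h | h | h | h
    · have := congrFun h 2; simp [portInd, hU 2] at this
    · have := congrFun h 1; simp [portInd, hU 1] at this
    · have := congrFun h 0; simp [portInd, hU 0] at this
    · have := congrFun h 0; simp [portInd, hU 0] at this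
  obtain ⟨T0, hT0, hi0⟩ := hsurj ![true, false, false]
    (by simp only [LXNOR, Set.mem_insert_iff]; tauto)
  obtain ⟨T1, hT1, hi1⟩ := hsurj ![false, true, false]
    (by simp only [LXNOR, Set.mem_insert_iff]; tauto)
  obtain ⟨T2, hT2, hi2⟩ := hsurj ![false, false, true]
    (by simp only [LXNOR, Set.mem_insert_iff]; tauto)
  obtain ⟨Tq, hTq, hiq⟩ := hsurj ![true, true, true]
    (by simp only [LXNOR, Set.mem_insert_iff, Set.mem_singleton_iff]; tauto)
  set S : Fin 3 → Finset (Fin 6) := ![T0, T1, T2] with hSdef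
  have hmwis : ∀ i, IsMWIS G Δ (S i) := by
    intro i; fin_cases i
    · exact hT0
    · exact hT1
    · exact hT2
  have hmemS : ∀ i, p i ∈ S i := by
    intro i; fin_cases i
    · exact (memP T0 _ hi0 0).1 rfl
    · exact (memP T1 _ hi1 1).1 rfl
    · exact (memP T2 _ hi2 2).1 rfl
  have hnmemS : ∀ i j : Fin 3, j ≠ i → p j ∉ S i := by
    intro i j h
    fin_cases i <;> fin_cases j
    · exact absurd rfl h
    · exact (memP T0 _ hi0 1).2 rfl
    · exact (memP T0 _ hi0 2).2 rfl
    · exact (memP T1 _ hi1 0).2 rfl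
    · exact absurd rfl h
    · exact (memP T1 _ hi1 2).2 rfl
    · exact (memP T2 _ hi2 0).2 rfl
    · exact (memP T2 _ hi2 1).2 rfl
    · exact absurd rfl h
  set W : ℝ := wt Δ Tq with hWdef
  have hle : ∀ T, IsIndepSet' G T → wt Δ T ≤ W := fun T h => hTq.2 T h
  have hstrict : ∀ T, IsIndepSet' G T → portInd p T ∉ LXNOR → wt Δ T < W := by
    intro T hT hL
    rcases lt_or_eq_of_le (hle T hT) with h | h
    · exact h
    · exact absurd (hfwd T ⟨hT, fun T' hT' => (hle T' hT').trans h.ge⟩) hL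
  have hW : ∀ i, wt Δ (S i) = W := fun i =>
    le_antisymm (hle _ (hmwis i).1) ((hmwis i).2 _ hTq.1)
  have hSstruct : ∀ i, ∀ u ∈ S i, u = p i ∨ (∀ l, u ≠ p l) := by
    intro i u hu
    by_cases h : ∀ l, u ≠ p l
    · exact Or.inr h
    · push_neg at h
      obtain ⟨l, hl⟩ := h
      left
      rcases eq_or_ne l i with rfl | hli
      · exact hl
      · exact absurd (hl ▸ hu) (hnmemS i l hli)
  have hneigh : ∀ i j : Fin 3, i ≠ j →
      ∃ u, u ∈ S j ∧ G.Adj (p i) u ∧ (∀ l, u ≠ p l) := by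
    intro i j hij
    obtain ⟨u, hu, hadj⟩ := mwis_adj_of_not_mem hΔ (hmwis j) (hnmemS j i hij)
    refine ⟨u, hu, hadj, ?_⟩
    rcases hSstruct j u hu with rfl | h
    · exact absurd hadj (hnadj i j hij)
    · exact h
  -- any MWIS `S i` contains at most one non-port vertex
  have hsing : ∀ i j k : Fin 3, i ≠ j → i ≠ k → j ≠ k →
      ∀ u v, u ∈ S i → v ∈ S i → (∀ l, u ≠ p l) → (∀ l, v ≠ p l) → u = v := by
    intro i j k hij hik hjk u v hu hv hunp hvnp
    by_contra huv
    have hI := (hmwis i).1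
    have hJ := (hmwis j).1
    have hK := (hmwis k).1
    have huv' : ¬ G.Adj u v := hI u hu v hv
    have hupi : ¬ G.Adj (p i) u := fun h => hI (p i) (hmemS i) u hu h
    have hvpi : ¬ G.Adj (p i) v := fun h => hI (p i) (hmemS i) v hv h
    obtain ⟨s, hsJ, hsadj, hsnp⟩ := hneigh i j hij
    obtain ⟨s', hs'K, hs'adj, hs'np⟩ := hneigh i k hik
    have hsu : s ≠ u := fun h => hupi (h ▸ hsadj)
    have hsv : s ≠ v := fun h => hvpi (h ▸ hsadj)
    have hs's : s' = s := by
      rcases mem_three_of_nonport hp huv (Ne.symm hsu) (Ne.symm hsv)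
        hunp hvnp hsnp hs'np with h | h | h
      · exact absurd (h ▸ hs'adj) hupi
      · exact absurd (h ▸ hs'adj) hvpi
      · exact h
    subst hs's
    have hspj : ¬ G.Adj (p j) s' := hJ _ (hmemS j) _ hsJ
    have hspk : ¬ G.Adj (p k) s' := hK _ (hmemS k) _ hs'K
    obtain ⟨t, htJ, htadj, htnp⟩ := hneigh k j (Ne.symm hjk)
    have hts : t ≠ s' := fun h => hspk (h ▸ htadj)
    have ht_mem : t = u ∨ t = v := by
      rcases mem_three_of_nonport hp huv (Ne.symm hsu) (Ne.symm hsv)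
        hunp hvnp hsnp htnp with h | h | h
      · exact Or.inl h
      · exact Or.inr h
      · exact absurd h hts
    obtain ⟨t', ht'K, ht'adj, ht'np⟩ := hneigh j k hjk
    have ht's : t' ≠ s' := fun h => hspj (h ▸ ht'adj)
    have ht'pk : ¬ G.Adj (p k) t' := hK _ (hmemS k) _ ht'K
    have htt' : t ≠ t' := fun h => ht'pk (h ▸ htadj)
    have ht'_mem : t' = u ∨ t' = v := by
      rcases mem_three_of_nonport hp huv (Ne.symm hsu) (Ne.symm hsv)
        hunp hvnp hsnp ht'np with h | h | h
      · exact Or.inl h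
      · exact Or.inr h
      · exact absurd h ht's
    have hu_tt : u = t ∨ u = t' := by
      rcases ht_mem with h | h
      · exact Or.inl h.symm
      · rcases ht'_mem with h' | h'
        · exact Or.inr h'.symm
        · exact absurd (h.trans h'.symm) htt'
    have hv_tt : v = t ∨ v = t' := by
      rcases ht'_mem with h' | h'
      · rcases ht_mem with h | h
        · exact absurd (h.trans h'.symm) htt'
        · exact Or.inl h.symm
      · exact Or.inr h'.symm
    -- determine the three MWIS completely
    have hsnmemI : s' ∉ S i := fun h => hI _ (hmemS i) _ h hsadj
    have hSi : S i = {p i, u, v} := by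
      ext w
      simp only [Finset.mem_insert, Finset.mem_singleton]
      constructor
      · intro hw
        rcases hSstruct i w hw with h | h
        · exact Or.inl h
        · rcases mem_three_of_nonport hp huv (Ne.symm hsu) (Ne.symm hsv)
            hunp hvnp hsnp h with h' | h' | h'
          · exact Or.inr (Or.inl h')
          · exact Or.inr (Or.inr h')
          · exact absurd (h' ▸ hw) hsnmemI
      · rintro (rfl | rfl | rfl)
        · exact hmemS i
        · exact hu
        · exact hv
    have ht'nS : t' ∉ S j := fun h => hJ _ (hmemS j) _ h ht'adj
    have hSj : S j = {p j, s', t} := by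
      ext w
      simp only [Finset.mem_insert, Finset.mem_singleton]
      constructor
      · intro hw
        rcases hSstruct j w hw with h | h
        · exact Or.inl h
        · rcases mem_three_of_nonport hp huv (Ne.symm hsu) (Ne.symm hsv)
            hunp hvnp hsnp h with h' | h' | h'
          · subst h'
            rcases hu_tt with h'' | h''
            · exact Or.inr (Or.inr h'')
            · exact absurd (h'' ▸ hw) ht'nS
          · subst h'
            rcases hv_tt with h'' | h''
            · exact Or.inr (Or.inr h'')
            · exact absurd (h'' ▸ hw) ht'nS
          · exact Or.inr (Or.inl h')
      · rintro (rfl | rfl | rfl)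
        · exact hmemS j
        · exact hsJ
        · exact htJ
    have htnS : t ∉ S k := fun h => hK _ (hmemS k) _ h htadj
    have hSk : S k = {p k, s', t'} := by
      ext w
      simp only [Finset.mem_insert, Finset.mem_singleton]
      constructor
      · intro hw
        rcases hSstruct k w hw with h | h
        · exact Or.inl h
        · rcases mem_three_of_nonport hp huv (Ne.symm hsu) (Ne.symm hsv)
            hunp hvnp hsnp h with h' | h' | h'
          · subst h'
            rcases hu_tt with h'' | h''
            · exact absurd (h'' ▸ hw) htnS
            · exact Or.inr (Or.inr h'')
          · subst h'
            rcases hv_tt with h'' | h''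
            · exact absurd (h'' ▸ hw) htnS
            · exact Or.inr (Or.inr h'')
          · exact Or.inr (Or.inl h')
      · rintro (rfl | rfl | rfl)
        · exact hmemS k
        · exact hs'K
        · exact ht'K
    -- weight equations
    have hwi := hW i
    rw [hSi, wt_triple' Δ (Ne.symm (hunp i)) (Ne.symm (hvnp i)) huv] at hwi
    have hwj := hW j
    rw [hSj, wt_triple' Δ (Ne.symm (hsnp j)) (Ne.symm (htnp j)) (Ne.symm hts)] at hwj
    have hwk := hW k
    rw [hSk, wt_triple' Δ (Ne.symm (hsnp k)) (Ne.symm (ht'np k)) (Ne.symm ht's)] at hwk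
    have htval : Δ t + Δ t' = Δ u + Δ v := by
      rcases ht_mem with h | h <;> rcases ht'_mem with h' | h'
      · exact absurd (h.trans h'.symm) htt'
      · rw [h, h']
      · rw [h, h']; ring
      · exact absurd (h.trans h'.symm) htt'
    -- the ancilla triple is independent with too much weight
    have hws : ∀ w, w = t ∨ w = t' → ¬ G.Adj w s' := by
      intro w hw
      rcases hw with rfl | rfl
      · exact fun h => hJ _ htJ _ hsJ h
      · exact fun h => hK _ ht'K _ hs'K h
    have hindep : IsIndepSet' G {u, v, s'} :=
      indep_triple' huv' (hws u hu_tt) (hws v hv_tt)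
    have hUL : portInd p {u, v, s'} ∉ LXNOR := by
      apply indFalse
      intro l
      simp only [Finset.mem_insert, Finset.mem_singleton]
      push_neg
      exact ⟨Ne.symm (hunp l), Ne.symm (hvnp l), Ne.symm (hsnp l)⟩
    have hlt := hstrict _ hindep hUL
    rw [wt_triple' Δ huv (Ne.symm hsu) (Ne.symm hsv)] at hlt
    have hports : Δ (p i) + Δ (p j) + Δ (p k) ≤ W := by
      have hind : IsIndepSet' G {p i, p j, p k} :=
        indep_triple' (hnadj i j hij) (hnadj i k hik) (hnadj j k hjk)
      have hb := hle _ hind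
      rwa [wt_triple' Δ (hp.ne hij) (hp.ne hik) (hp.ne hjk)] at hb
    linarith
  -- extract the unique ancilla of each `S i`
  have hq : ∀ i j k : Fin 3, i ≠ j → i ≠ k → j ≠ k →
      ∃ q, q ∈ S i ∧ (∀ l, q ≠ p l) ∧ G.Adj (p j) q ∧ G.Adj (p k) q ∧
        S i = {p i, q} := by
    intro i j k hij hik hjk
    obtain ⟨q, hqS, hqadj, hqnp⟩ := hneigh j i (Ne.symm hij)
    obtain ⟨q', hq'S, hq'adj, hq'np⟩ := hneigh k i (Ne.symm hik)
    have hqq : q' = q := hsing i j k hij hik hjk q' q hq'S hqS hq'np hqnp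
    rw [hqq] at hq'adj
    refine ⟨q, hqS, hqnp, hqadj, hq'adj, ?_⟩
    ext w
    simp only [Finset.mem_insert, Finset.mem_singleton]
    constructor
    · intro hw
      rcases hSstruct i w hw with h | h
      · exact Or.inl h
      · exact Or.inr (hsing i j k hij hik hjk w q hw hqS h hqnp)
    · rintro (rfl | rfl)
      · exact hmemS i
      · exact hqS
  obtain ⟨q0, hq0S, hq0np, hq0a1, hq0a2, hS0⟩ :=
    hq 0 1 2 (by decide) (by decide) (by decide)
  obtain ⟨q1, hq1S, hq1np, hq1a0, hq1a2, hS1⟩ :=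
    hq 1 0 2 (by decide) (by decide) (by decide)
  obtain ⟨q2, hq2S, hq2np, hq2a0, hq2a1, hS2⟩ :=
    hq 2 0 1 (by decide) (by decide) (by decide)
  have hq0p : ¬ G.Adj (p 0) q0 := fun h => (hmwis 0).1 _ (hmemS 0) _ hq0S h
  have hq1p : ¬ G.Adj (p 1) q1 := fun h => (hmwis 1).1 _ (hmemS 1) _ hq1S h
  have hq2p : ¬ G.Adj (p 2) q2 := fun h => (hmwis 2).1 _ (hmemS 2) _ hq2S h
  have hq01 : q0 ≠ q1 := fun h => hq0p (by rw [h]; exact hq1a0)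
  have hq02 : q0 ≠ q2 := fun h => hq0p (by rw [h]; exact hq2a0)
  have hq12 : q1 ≠ q2 := fun h => hq1p (by rw [h]; exact hq2a1)
  have hW0 := hW 0
  rw [hS0, wt_pair' Δ (Ne.symm (hq0np 0))] at hW0
  have hW1 := hW 1
  rw [hS1, wt_pair' Δ (Ne.symm (hq1np 1))] at hW1
  have hW2 := hW 2
  rw [hS2, wt_pair' Δ (Ne.symm (hq2np 2))] at hW2
  -- the top MWIS is exactly the ports, so W = sum of port weights
  have hpq : ∀ i, p i ∈ Tq := by
    intro i
    apply (memP Tq _ hiq i).1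
    fin_cases i <;> rfl
  have hnonport_mem : ∀ w : Fin 6, (∀ l, w ≠ p l) → w = q0 ∨ w = q1 ∨ w = q2 :=
    fun w hw => mem_three_of_nonport hp hq01 hq02 hq12 hq0np hq1np hq2np hw
  have hWval : Δ (p 0) + Δ (p 1) + Δ (p 2) = W := by
    have hTqeq : Tq = {p 0, p 1, p 2} := by
      ext w
      simp only [Finset.mem_insert, Finset.mem_singleton]
      constructor
      · intro hw
        by_cases hnp : ∀ l, w ≠ p l
        · exfalso
          rcases hnonport_mem w hnp with rfl | rfl | rfl
          · exact hTq.1 _ (hpq 1) _ hw hq0a1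
          · exact hTq.1 _ (hpq 0) _ hw hq1a0
          · exact hTq.1 _ (hpq 0) _ hw hq2a0
        · push_neg at hnp
          obtain ⟨l, rfl⟩ := hnp
          fin_cases l
          · exact Or.inl rfl
          · exact Or.inr (Or.inl rfl)
          · exact Or.inr (Or.inr rfl)
      · rintro (rfl | rfl | rfl) <;> exact hpq _
    rw [hWdef, hTqeq, wt_triple' Δ (hp.ne (by decide)) (hp.ne (by decide))
      (hp.ne (by decide))]
  have hq0w : Δ q0 = Δ (p 1) + Δ (p 2) := by linarith
  have hq1w : Δ q1 = Δ (p 0) + Δ (p 2) := by linarith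
  have hq2w : Δ q2 = Δ (p 0) + Δ (p 1) := by linarith
  -- ancillas are pairwise adjacent
  have haq01 : G.Adj q0 q1 := by
    by_contra h
    have hb := hle _ (indep_pair' h)
    rw [wt_pair' Δ hq01] at hb
    have := hΔ (p 2)
    linarith
  have haq02 : G.Adj q0 q2 := by
    by_contra h
    have hb := hle _ (indep_pair' h)
    rw [wt_pair' Δ hq02] at hb
    have := hΔ (p 1)
    linarith
  have haq12 : G.Adj q1 q2 := by
    by_contra h
    have hb := hle _ (indep_pair' h)
    rw [wt_pair' Δ hq12] at hb
    have := hΔ (p 0)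
    linarith
  -- build the isomorphism
  set f : Fin 6 → Fin 6 := ![p 0, p 1, p 2, q0, q1, q2] with hfdef
  have hfne : ∀ a b : Fin 6, a ≠ b → f a ≠ f b := by
    intro a b
    fin_cases a <;> fin_cases b
    exacts [fun h => absurd rfl h, fun _ => hp.ne (by decide), fun _ => hp.ne (by decide),
      fun _ => Ne.symm (hq0np 0), fun _ => Ne.symm (hq1np 0), fun _ => Ne.symm (hq2np 0),
      fun _ => hp.ne (by decide), fun h => absurd rfl h, fun _ => hp.ne (by decide),
      fun _ => Ne.symm (hq0np 1), fun _ => Ne.symm (hq1np 1), fun _ => Ne.symm (hq2np 1),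
      fun _ => hp.ne (by decide), fun _ => hp.ne (by decide), fun h => absurd rfl h,
      fun _ => Ne.symm (hq0np 2), fun _ => Ne.symm (hq1np 2), fun _ => Ne.symm (hq2np 2),
      fun _ => hq0np 0, fun _ => hq0np 1, fun _ => hq0np 2,
      fun h => absurd rfl h, fun _ => hq01, fun _ => hq02,
      fun _ => hq1np 0, fun _ => hq1np 1, fun _ => hq1np 2,
      fun _ => Ne.symm hq01, fun h => absurd rfl h, fun _ => hq12,
      fun _ => hq2np 0, fun _ => hq2np 1, fun _ => hq2np 2,
      fun _ => Ne.symm hq02, fun _ => Ne.symm hq12, fun h => absurd rfl h]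
  have hfinj : Function.Injective f := by
    intro a b hab
    by_contra h
    exact hfne a b h hab
  have hbij : Function.Bijective f :=
    (Fintype.bijective_iff_injective_and_card f).mpr ⟨hfinj, rfl⟩
  have hadj_iff : ∀ a b : Fin 6, G.Adj (f a) (f b) ↔ xnorGraph.Adj a b := by
    intro a b
    fin_cases a <;> fin_cases b
    exacts [iff_of_false (G.loopless.irrefl _) (by decide),
      iff_of_false (hnadj 0 1 (by decide)) (by decide),
      iff_of_false (hnadj 0 2 (by decide)) (by decide),
      iff_of_false hq0p (by decide),
      iff_of_true hq1a0 (by decide),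
      iff_of_true hq2a0 (by decide),
      iff_of_false (hnadj 1 0 (by decide)) (by decide),
      iff_of_false (G.loopless.irrefl _) (by decide),
      iff_of_false (hnadj 1 2 (by decide)) (by decide),
      iff_of_true hq0a1 (by decide),
      iff_of_false hq1p (by decide),
      iff_of_true hq2a1 (by decide),
      iff_of_false (hnadj 2 0 (by decide)) (by decide),
      iff_of_false (hnadj 2 1 (by decide)) (by decide),
      iff_of_false (G.loopless.irrefl _) (by decide),
      iff_of_true hq0a2 (by decide),
      iff_of_true hq1a2 (by decide),
      iff_of_false hq2p (by decide),
      iff_of_false (fun h => hq0p h.symm) (by decide),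
      iff_of_true hq0a1.symm (by decide),
      iff_of_true hq0a2.symm (by decide),
      iff_of_false (G.loopless.irrefl _) (by decide),
      iff_of_true haq01 (by decide),
      iff_of_true haq02 (by decide),
      iff_of_true hq1a0.symm (by decide),
      iff_of_false (fun h => hq1p h.symm) (by decide),
      iff_of_true hq1a2.symm (by decide),
      iff_of_true haq01.symm (by decide),
      iff_of_false (G.loopless.irrefl _) (by decide),
      iff_of_true haq12 (by decide),
      iff_of_true hq2a0.symm (by decide),
      iff_of_true hq2a1.symm (by decide),
      iff_of_false (fun h => hq2p h.symm) (by decide),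
      iff_of_true haq02.symm (by decide),
      iff_of_true haq12.symm (by decide),
      iff_of_false (G.loopless.irrefl _) (by decide)]
  let e : Fin 6 ≃ Fin 6 := Equiv.ofBijective f hbij
  let ψ : xnorGraph ≃g G := ⟨e, fun {a b} => hadj_iff a b⟩
  refine ⟨ψ.symm, ?_, ?_, ?_, ?_⟩
  · intro i
    fin_cases i
    · show e.symm (p 0) = _
      rw [Equiv.symm_apply_eq]; rfl
    · show e.symm (p 1) = _
      rw [Equiv.symm_apply_eq]; rfl
    · show e.symm (p 2) = _
      rw [Equiv.symm_apply_eq]; rfl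
  · show Δ (e 3) = _
    exact hq0w
  · show Δ (e 4) = _
    exact hq1w
  · show Δ (e 5) = _
    exact hq2w
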